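/- The theta function θ₀₁(0,τ) = ∑_{n∈ℤ} exp(πin²τ + πin) (i.e. ∑_{n∈ℤ} (−1)ⁿ exp(πin²τ)) satisfies the product formula θ₀₁(0,τ) = ∏_{m=1}^∞ (1 − exp(2πimτ)) · ∏_{m=0}^∞ (1 − exp(πi(2m+1)τ))² for all τ in the upper half plane. -/

import Mathlib

/-!
This is the case `z = -1` of the Jacobi triple product
`∑ z^m q^(m²) = ∏ (1 - q^(2n+2)) (1 + z q^(2n+1)) (1 + z⁻¹ q^(2n+1))`, with `q = exp(πiτ)`.
The triple product is the limit of its finite form, in which `x = q²`: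
`(x;x)_{2N} ∑_m z^m q^(m²) / ((x;x)_{N+m} (x;x)_{N-m})`
`  = ∏_{j<N} (1 + z q^(2j+1)) (1 + z⁻¹ q^(2j+1))`,
which follows by induction on `N` from the Pascal-type recurrence of the Gaussian binomials
`[2N, N+m]_x`. As `N → ∞` each summand tends to `z^m q^(m²) / (x;x)_∞²`, and the summands are
dominated by a constant times `|z^m q^(m²)|`, so Tannery's theorem passes to the limit.
-/

open Complex Filter Topology Finset

namespace JacobiTripleProduct

noncomputable def qPochhammer (x : ℂ) (n : ℕ) : ℂ := ∏ j ∈ range n, (1 - x ^ (j + 1))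

/-- `1 / (x;x)_j`, extended by `0` to `j < 0`: then `qPochhammerInv_eq_mul` holds on all of `ℤ`,
and the summands of the finite identity vanish for `|m| > N` without case distinctions. -/
noncomputable def qPochhammerInv (x : ℂ) (j : ℤ) : ℂ :=
  if 0 ≤ j then (qPochhammer x j.toNat)⁻¹ else 0

variable {x : ℂ}

lemma qPochhammer_succ (x : ℂ) (n : ℕ) :
    qPochhammer x (n + 1) = qPochhammer x n * (1 - x ^ (n + 1)) :=
  prod_range_succ _ _

lemma norm_pow_lt_one (hx : ‖x‖ < 1) {n : ℕ} (hn : n ≠ 0) : ‖x ^ n‖ < 1 := by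
  rw [norm_pow]; exact pow_lt_one₀ (norm_nonneg x) hx hn

lemma one_sub_pow_ne_zero (hx : ‖x‖ < 1) {n : ℕ} (hn : n ≠ 0) : 1 - x ^ n ≠ 0 := by
  refine sub_ne_zero.mpr fun h ↦ (norm_pow_lt_one hx hn).ne ?_
  rw [← h, norm_one]

lemma qPochhammerInv_of_neg {j : ℤ} (hj : j < 0) : qPochhammerInv x j = 0 :=
  if_neg hj.not_ge

lemma qPochhammerInv_eq_mul (hx : ‖x‖ < 1) (j : ℤ) :
    qPochhammerInv x j = qPochhammerInv x (j + 1) * (1 - x ^ (j + 1)) := by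
  rcases lt_trichotomy j (-1) with hj | rfl | hj
  · rw [qPochhammerInv_of_neg (by omega), qPochhammerInv_of_neg (by omega), zero_mul]
  · simp [qPochhammerInv]
  · lift j to ℕ using (by omega)
    have h := one_sub_pow_ne_zero hx j.succ_ne_zero
    rw [qPochhammerInv, qPochhammerInv, if_pos (by omega), if_pos (by omega),
      show j + 1 = ((j + 1 : ℕ) : ℤ) by push_cast; rfl, Int.toNat_natCast, Int.toNat_natCast,
      zpow_natCast, qPochhammer_succ, mul_inv, inv_mul_cancel_right₀ h]

lemma tprod_one_sub_pow_ne_zero (hx : ‖x‖ < 1) : ∏' n : ℕ, (1 - x ^ (n + 1)) ≠ 0 := by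
  refine tprod_one_add_ne_zero_of_summable (f := fun n ↦ -x ^ (n + 1))
    (fun n ↦ one_sub_pow_ne_zero hx n.succ_ne_zero) ?_
  simpa using (summable_nat_add_iff 1).mpr (summable_geometric_of_lt_one (norm_nonneg _) hx)

lemma tendsto_qPochhammer (hx : ‖x‖ < 1) :
    Tendsto (qPochhammer x) atTop (𝓝 (∏' n : ℕ, (1 - x ^ (n + 1)))) :=
  (ModularForm.multipliable_one_sub_pow hx).hasProd.tendsto_prod_nat

lemma tendsto_qPochhammerInv (hx : ‖x‖ < 1) (m : ℤ) :
    Tendsto (fun N : ℕ ↦ qPochhammerInv x (N + m)) atTop (𝓝 (∏' n : ℕ, (1 - x ^ (n + 1)))⁻¹) := by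
  have hN : Tendsto (fun N : ℕ ↦ (N + m).toNat) atTop atTop :=
    tendsto_atTop_atTop.mpr fun b ↦ ⟨b + m.natAbs, fun N hN ↦ by omega⟩
  refine (((tendsto_qPochhammer hx).comp hN).inv₀ (tprod_one_sub_pow_ne_zero hx)).congr' ?_
  filter_upwards [eventually_ge_atTop m.natAbs] with N hN
  simp [qPochhammerInv, show 0 ≤ (N : ℤ) + m by omega]

lemma exists_norm_qPochhammerInv_le (hx : ‖x‖ < 1) : ∃ C, ∀ j, ‖qPochhammerInv x j‖ ≤ C := by
  obtain ⟨C, hC⟩ := isBounded_iff_forall_norm_le.mp (Metric.isBounded_range_of_tendsto _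
    ((tendsto_qPochhammer hx).inv₀ (tprod_one_sub_pow_ne_zero hx)))
  refine ⟨max C 0, fun j ↦ ?_⟩
  unfold qPochhammerInv
  split_ifs
  · exact (hC _ ⟨j.toNat, rfl⟩).trans (le_max_left _ _)
  · simp

noncomputable def thetaCoeff (q z : ℂ) (m : ℤ) : ℂ := z ^ m * q ^ (m ^ 2)

/-- `qPochhammer (q ^ 2) (2 * N) * truncatedTerm q z N m` is `z^m q^(m²) [2N, N+m]_{q²}`. -/
noncomputable def truncatedTerm (q z : ℂ) (N : ℕ) (m : ℤ) : ℂ :=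
  thetaCoeff q z m * qPochhammerInv (q ^ 2) (N + m) * qPochhammerInv (q ^ 2) (N - m)

variable {q z : ℂ}

lemma zpow_mul_zpow_eq_zpow_mul_zpow (hq : q ≠ 0) {a b c d : ℤ} (h : a + b = c + d) :
    q ^ a * q ^ b = q ^ c * q ^ d := by
  rw [← zpow_add₀ hq, ← zpow_add₀ hq, h]

lemma pow_mul_thetaCoeff_sub_one (hq : q ≠ 0) (hz : z ≠ 0) (N : ℕ) (m : ℤ) :
    q ^ (2 * N + 1) * (z * thetaCoeff q z (m - 1)) =
      thetaCoeff q z m * (q ^ 2) ^ ((N : ℤ) - m + 1) := by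
  have hq' : q ^ ((2 * N + 1 : ℕ) : ℤ) * q ^ ((m - 1) ^ 2) = q ^ (m ^ 2) * q ^ (2 * (N - m + 1)) :=
    zpow_mul_zpow_eq_zpow_mul_zpow hq (by push_cast; ring)
  rw [zpow_natCast] at hq'
  rw [thetaCoeff, thetaCoeff, ← zpow_ofNat q 2, ← zpow_mul, zpow_sub_one₀ hz]
  calc _ = z ^ m * (z * z⁻¹) * (q ^ (2 * N + 1) * q ^ ((m - 1) ^ 2)) := by ring
    _ = _ := by rw [mul_inv_cancel₀ hz, hq']; ring

lemma pow_mul_thetaCoeff_add_one (hq : q ≠ 0) (hz : z ≠ 0) (N : ℕ) (m : ℤ) :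
    q ^ (2 * N + 1) * (z⁻¹ * thetaCoeff q z (m + 1)) =
      thetaCoeff q z m * (q ^ 2) ^ ((N : ℤ) + m + 1) := by
  have hq' : q ^ ((2 * N + 1 : ℕ) : ℤ) * q ^ ((m + 1) ^ 2) = q ^ (m ^ 2) * q ^ (2 * (N + m + 1)) :=
    zpow_mul_zpow_eq_zpow_mul_zpow hq (by push_cast; ring)
  rw [zpow_natCast] at hq'
  rw [thetaCoeff, thetaCoeff, ← zpow_ofNat q 2, ← zpow_mul, zpow_add_one₀ hz]
  calc _ = z ^ m * (z⁻¹ * z) * (q ^ (2 * N + 1) * q ^ ((m + 1) ^ 2)) := by ring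
    _ = _ := by rw [inv_mul_cancel₀ hz, hq']; ring

lemma truncatedTerm_succ (hq0 : q ≠ 0) (hq : ‖q‖ < 1) (hz : z ≠ 0) (N : ℕ) (m : ℤ) :
    qPochhammer (q ^ 2) (2 * N + 2) * truncatedTerm q z (N + 1) m =
      qPochhammer (q ^ 2) (2 * N) * ((1 + q ^ (4 * N + 2)) * truncatedTerm q z N m +
        q ^ (2 * N + 1) * (z * truncatedTerm q z N (m - 1) +
          z⁻¹ * truncatedTerm q z N (m + 1))) := by
  have hx : ‖q ^ 2‖ < 1 := norm_pow_lt_one hq two_ne_zero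
  have hA := pow_mul_thetaCoeff_sub_one hq0 hz N m
  have hB := pow_mul_thetaCoeff_add_one hq0 hz N m
  unfold truncatedTerm
  rw [show ((N + 1 : ℕ) : ℤ) + m = N + m + 1 by push_cast; ring,
    show ((N + 1 : ℕ) : ℤ) - m = N - m + 1 by push_cast; ring,
    show (N : ℤ) + (m - 1) = N + m - 1 by ring, show (N : ℤ) - (m - 1) = N - m + 1 by ring,
    show (N : ℤ) + (m + 1) = N + m + 1 by ring, show (N : ℤ) - (m + 1) = N - m - 1 by ring]
  set g := qPochhammerInv (q ^ 2)
  set x := q ^ 2 with hx_def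
  have hx0 : x ≠ 0 := pow_ne_zero 2 hq0
  set u := x ^ ((N : ℤ) + m)
  set v := x ^ ((N : ℤ) - m)
  rw [zpow_add_one₀ hx0] at hA hB
  have ga : g (N + m) = g (N + m + 1) * (1 - u * x) := by
    rw [← zpow_add_one₀ hx0]; exact qPochhammerInv_eq_mul hx _
  have gb : g (N - m) = g (N - m + 1) * (1 - v * x) := by
    rw [← zpow_add_one₀ hx0]; exact qPochhammerInv_eq_mul hx _
  have ga' : g (N + m - 1) = g (N + m) * (1 - u) := by
    simpa using qPochhammerInv_eq_mul hx ((N : ℤ) + m - 1)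
  have gb' : g (N - m - 1) = g (N - m) * (1 - v) := by
    simpa using qPochhammerInv_eq_mul hx ((N : ℤ) - m - 1)
  have hx1 : x ^ (2 * N + 1) = u * v * x := by
    rw [← zpow_natCast, ← zpow_add₀ hx0, ← zpow_add_one₀ hx0]; congr 1; push_cast; ring
  have hq4 : q ^ (4 * N + 2) = u * v * x := by rw [← hx1, hx_def, ← pow_mul]; ring_nf
  have hP : qPochhammer x (2 * N + 2) =
      qPochhammer x (2 * N) * (1 - u * v * x) * (1 - u * v * x * x) := by
    rw [qPochhammer_succ, qPochhammer_succ, pow_succ x (2 * N + 1), hx1]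
  rw [ga', gb', ga, gb, hq4, hP]
  linear_combination
    -(qPochhammer x (2 * N) * g (N + m + 1) * (1 - u * x) * (1 - u) * g (N - m + 1)) * hA
    - (qPochhammer x (2 * N) * g (N + m + 1) * g (N - m + 1) * (1 - v * x) * (1 - v)) * hB

lemma truncatedTerm_eq_zero {N : ℕ} {m : ℤ} (hm : m ∉ Icc (-(N : ℤ)) N) :
    truncatedTerm q z N m = 0 := by
  rw [mem_Icc, not_and_or, not_le, not_le] at hm
  rcases hm with hm | hm
  · rw [truncatedTerm, qPochhammerInv_of_neg (j := N + m) (by omega), mul_zero, zero_mul]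
  · rw [truncatedTerm, qPochhammerInv_of_neg (j := N - m) (by omega), mul_zero]

lemma summable_truncatedTerm (q z : ℂ) (N : ℕ) : Summable (truncatedTerm q z N) :=
  summable_of_ne_finset_zero fun _ ↦ truncatedTerm_eq_zero

lemma qPochhammer_mul_tsum_truncatedTerm (hq0 : q ≠ 0) (hq : ‖q‖ < 1) (hz : z ≠ 0) (N : ℕ) :
    qPochhammer (q ^ 2) (2 * N) * ∑' m, truncatedTerm q z N m =
      ∏ j ∈ range N, (1 + z * q ^ (2 * j + 1)) * (1 + z⁻¹ * q ^ (2 * j + 1)) := by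
  induction N with
  | zero =>
    rw [tsum_eq_single 0 fun m hm ↦ truncatedTerm_eq_zero (by simpa using hm)]
    simp [truncatedTerm, thetaCoeff, qPochhammerInv, qPochhammer]
  | succ N ih =>
    set S := ∑' m, truncatedTerm q z N m
    have hS : HasSum (truncatedTerm q z N) S := (summable_truncatedTerm q z N).hasSum
    have hS_sub : HasSum (fun m ↦ truncatedTerm q z N (m - 1)) S :=
      ((Equiv.subRight (1 : ℤ)).hasSum_iff (f := truncatedTerm q z N)).mpr hS
    have hS_add : HasSum (fun m ↦ truncatedTerm q z N (m + 1)) S :=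
      ((Equiv.addRight (1 : ℤ)).hasSum_iff (f := truncatedTerm q z N)).mpr hS
    have hstep : HasSum (fun m ↦ qPochhammer (q ^ 2) (2 * N + 2) * truncatedTerm q z (N + 1) m)
        (qPochhammer (q ^ 2) (2 * N) *
          ((1 + q ^ (4 * N + 2)) * S + q ^ (2 * N + 1) * (z * S + z⁻¹ * S))) := by
      simp_rw [truncatedTerm_succ hq0 hq hz]
      exact ((hS.mul_left _).add
        (((hS_sub.mul_left z).add (hS_add.mul_left z⁻¹)).mul_left _)).mul_left _
    rw [mul_add_one, ← tsum_mul_left, hstep.tsum_eq, prod_range_succ, ← ih]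
    linear_combination -(qPochhammer (q ^ 2) (2 * N) * S * q ^ (4 * N + 2)) * mul_inv_cancel₀ hz

lemma summable_pow_mul_pow_sq (a : ℝ) {r : ℝ} (hr0 : 0 ≤ r) (hr : r < 1) :
    Summable fun n : ℕ ↦ a ^ n * r ^ (n ^ 2) := by
  have hsmall : ∀ᶠ n : ℕ in atTop, ‖a * r ^ n‖ ≤ 1 / 2 := by
    have := ((tendsto_pow_atTop_nhds_zero_of_lt_one hr0 hr).const_mul a).norm
    rw [mul_zero, norm_zero] at this
    exact this.eventually_le_const (by norm_num)
  refine .of_norm_bounded_eventually_nat summable_geometric_two ?_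
  filter_upwards [hsmall] with n hn
  rw [sq, pow_mul, ← mul_pow, norm_pow]
  exact pow_le_pow_left₀ (norm_nonneg _) hn n

lemma summable_norm_thetaCoeff (hq : ‖q‖ < 1) : Summable fun m ↦ ‖thetaCoeff q z m‖ := by
  have h := summable_pow_mul_pow_sq ‖z‖ (norm_nonneg q) hq
  have h' := summable_pow_mul_pow_sq ‖z‖⁻¹ (norm_nonneg q) hq
  refine .of_nat_of_neg ?_ ?_
  · refine h.congr fun n ↦ ?_
    rw [thetaCoeff, norm_mul, norm_zpow, norm_zpow, ← Nat.cast_pow, zpow_natCast, zpow_natCast]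
  · refine h'.congr fun n ↦ ?_
    rw [thetaCoeff, norm_mul, norm_zpow, norm_zpow, neg_sq, ← Nat.cast_pow, zpow_natCast, zpow_neg,
      zpow_natCast, inv_pow]

lemma tendsto_truncatedTerm (hq : ‖q‖ < 1) (m : ℤ) :
    Tendsto (fun N ↦ truncatedTerm q z N m) atTop
      (𝓝 (thetaCoeff q z m * (∏' n : ℕ, (1 - (q ^ 2) ^ (n + 1)))⁻¹ *
        (∏' n : ℕ, (1 - (q ^ 2) ^ (n + 1)))⁻¹)) := by
  simp_rw [truncatedTerm, sub_eq_add_neg]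
  exact (tendsto_const_nhds.mul (tendsto_qPochhammerInv (norm_pow_lt_one hq two_ne_zero) m)).mul
    (tendsto_qPochhammerInv (norm_pow_lt_one hq two_ne_zero) (-m))

lemma exists_norm_truncatedTerm_le (hq : ‖q‖ < 1) :
    ∃ C, ∀ N m, ‖truncatedTerm q z N m‖ ≤ C * ‖thetaCoeff q z m‖ := by
  obtain ⟨C, hC⟩ := exists_norm_qPochhammerInv_le (norm_pow_lt_one hq two_ne_zero)
  refine ⟨C * C, fun N m ↦ ?_⟩
  rw [truncatedTerm, norm_mul, norm_mul]
  have hC0 : 0 ≤ C := (norm_nonneg _).trans (hC 0)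
  calc _ ≤ ‖thetaCoeff q z m‖ * C * C := by gcongr <;> exact hC _
    _ = _ := by ring

lemma multipliable_one_add_mul_pow_odd (c : ℂ) (hq : ‖q‖ < 1) :
    Multipliable fun n : ℕ ↦ 1 + c * q ^ (2 * n + 1) := by
  refine multipliable_one_add_of_summable ?_
  refine ((summable_geometric_of_lt_one (norm_nonneg _) (norm_pow_lt_one hq two_ne_zero)).mul_left
    (‖c‖ * ‖q‖)).congr fun n ↦ ?_
  rw [norm_mul, norm_pow, norm_pow, ← pow_mul]
  ring

theorem tsum_thetaCoeff (hq0 : q ≠ 0) (hq : ‖q‖ < 1) (hz : z ≠ 0) :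
    ∑' m, thetaCoeff q z m = (∏' n : ℕ, (1 - (q ^ 2) ^ (n + 1))) *
      (∏' n : ℕ, (1 + z * q ^ (2 * n + 1))) * ∏' n : ℕ, (1 + z⁻¹ * q ^ (2 * n + 1)) := by
  set P := ∏' n : ℕ, (1 - (q ^ 2) ^ (n + 1))
  have hP : P ≠ 0 := tprod_one_sub_pow_ne_zero (norm_pow_lt_one hq two_ne_zero)
  obtain ⟨C, hC⟩ := exists_norm_truncatedTerm_le (z := z) hq
  have hS : Tendsto (fun N ↦ ∑' m, truncatedTerm q z N m) atTop
      (𝓝 (∑' m, thetaCoeff q z m * P⁻¹ * P⁻¹)) :=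
    tendsto_tsum_of_dominated_convergence ((summable_norm_thetaCoeff hq).mul_left C)
      (tendsto_truncatedTerm hq) (.of_forall hC)
  have hQ : Tendsto (fun N ↦ qPochhammer (q ^ 2) (2 * N)) atTop (𝓝 P) :=
    (tendsto_qPochhammer (norm_pow_lt_one hq two_ne_zero)).comp
      (tendsto_atTop_mono (fun N ↦ Nat.le_mul_of_pos_left N two_pos) tendsto_id)
  have hR : Tendsto
      (fun N ↦ ∏ j ∈ range N, (1 + z * q ^ (2 * j + 1)) * (1 + z⁻¹ * q ^ (2 * j + 1))) atTop 
      (𝓝 ((∏' n : ℕ, (1 + z * q ^ (2 * n + 1))) * ∏' n : ℕ, (1 + z⁻¹ * q ^ (2 * n + 1)))) := by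
    simp_rw [prod_mul_distrib]
    exact (multipliable_one_add_mul_pow_odd z hq).hasProd.tendsto_prod_nat.mul
      (multipliable_one_add_mul_pow_odd z⁻¹ hq).hasProd.tendsto_prod_nat
  have h := tendsto_nhds_unique (hQ.mul hS)
    (hR.congr fun N ↦ (qPochhammer_mul_tsum_truncatedTerm hq0 hq hz N).symm)
  rw [tsum_mul_right, tsum_mul_right] at h
  rw [mul_assoc, ← h]
  field_simp

theorem tsum_neg_one_zpow_mul_zpow_sq (hq0 : q ≠ 0) (hq : ‖q‖ < 1) :
    ∑' m : ℤ, (-1) ^ m * q ^ (m ^ 2) =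
      (∏' n : ℕ, (1 - (q ^ 2) ^ (n + 1))) * (∏' n : ℕ, (1 - q ^ (2 * n + 1))) ^ 2 := by
  have h := tsum_thetaCoeff hq0 hq (neg_ne_zero.mpr one_ne_zero)
  simp only [inv_neg, inv_one, neg_one_mul, ← sub_eq_add_neg] at h
  rw [pow_two (∏' n : ℕ, (1 - q ^ (2 * n + 1))), ← mul_assoc]
  exact h

end JacobiTripleProduct

open Complex

theorem theta01_product_formula (τ : ℂ) (hτ : 0 < τ.im) :
    (∑' n : ℤ, Complex.exp ((Real.pi : ℂ) * I * (n : ℂ) ^ 2 * τ + (Real.pi : ℂ) * I * (n : ℂ))) =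
      (∏' m : ℕ, (1 - Complex.exp (2 * (Real.pi : ℂ) * I * ((m : ℂ) + 1) * τ))) *
      (∏' m : ℕ, (1 - Complex.exp ((Real.pi : ℂ) * I * (2 * (m : ℂ) + 1) * τ))) ^ 2 := by
  set q := cexp (Real.pi * I * τ)
  have hq : ‖q‖ < 1 := by
    rw [norm_exp, Real.exp_lt_one_iff]
    simpa using mul_pos Real.pi_pos hτ
  have hθ (n : ℤ) :
      cexp (Real.pi * I * n ^ 2 * τ + Real.pi * I * n) = (-1) ^ n * q ^ (n ^ 2) := by
    rw [exp_add, mul_comm, ← exp_pi_mul_I, ← exp_int_mul, ← exp_int_mul]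
    congr 2 <;> push_cast <;> ring
  have heven (m : ℕ) : cexp (2 * Real.pi * I * (m + 1) * τ) = (q ^ 2) ^ (m + 1) := by
    rw [← pow_mul, ← exp_nat_mul]
    congr 1; push_cast; ring
  have hodd (m : ℕ) : cexp (Real.pi * I * (2 * m + 1) * τ) = q ^ (2 * m + 1) := by
    rw [← exp_nat_mul]
    congr 1; push_cast; ring
  simp_rw [hθ, heven, hodd]
  exact JacobiTripleProduct.tsum_neg_one_zpow_mul_zpow_sq (exp_ne_zero _) hq
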